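/- arXiv:1302.5591 — 8 statements merged into one kernel-verified Lean document; each statement's English description precedes it below -/
import Mathlib

section
/- Let q = 2^m, let f(x) = x^(2^i+1) with 0 ≤ i < m, and let d = gcd(i, m). If m/d is even, then the image set I_f(0) = {f(x) : x ∈ F_q} has cardinality 1 + (q−1)/(2^d+1). -/
/-!
The nonzero values of `x ↦ x ^ n` on `F_q` form the subgroup of `n`-th powers of the cyclic group
`F_qˣ`, of order `(q - 1) / gcd (q - 1) n`. For `n = 2 ^ i + 1` and `m / d` even this gcd is
`2 ^ d + 1`: from `2 ^ (2i) - 1 = (2 ^ i - 1)(2 ^ i + 1)` with coprime odd factors and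
`gcd (2 ^ a - 1) (2 ^ b - 1) = 2 ^ gcd a b - 1`, using `gcd (2i) m = 2d`.
-/

namespace Nat

theorem gcd_two_mul_left_of_even_div_gcd {i m : ℕ} (hm : 0 < m) (h : Even (m / gcd i m)) :
    gcd (2 * i) m = 2 * gcd i m := by
  obtain ⟨i', m', hcop, hi, hm'⟩ := exists_coprime i m
  have hd : 0 < gcd i m := gcd_pos_of_pos_right i hm
  have h2 : 2 ∣ m' := by
    rw [Nat.div_eq_of_eq_mul_left hd hm'] at h
    exact h.two_dvd
  calc gcd (2 * i) m = gcd (2 * i' * gcd i m) (m' * gcd i m) := by rw [← hm', mul_assoc, ← hi]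
    _ = gcd 2 m' * gcd i m := by rw [gcd_mul_right, hcop.gcd_mul_right_cancel]
    _ = 2 * gcd i m := by rw [gcd_eq_left h2]

theorem coprime_pow_sub_one_pow_add_one {a i : ℕ} (ha : Even a) (ha0 : a ≠ 0) (hi : i ≠ 0) :
    Coprime (a ^ i - 1) (a ^ i + 1) := by
  have hpos : 1 ≤ a ^ i := one_le_pow _ _ (pos_of_ne_zero ha0)
  have hodd : Odd (a ^ i - 1) := Even.sub_odd hpos (ha.pow_of_ne_zero hi) odd_one
  rw [show a ^ i + 1 = 2 + (a ^ i - 1) by omega, coprime_add_self_right]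
  exact hodd.coprime_two_right

theorem gcd_pow_add_one_pow_sub_one {a i m : ℕ} (ha : Even a) (ha0 : a ≠ 0) (hm : 0 < m)
    (h : Even (m / gcd i m)) : gcd (a ^ i + 1) (a ^ m - 1) = a ^ gcd i m + 1 := by
  set d := gcd i m
  have hi : i ≠ 0 := by
    rintro rfl
    simp [d, Nat.div_self hm] at h
  have hd : 1 < a ^ d := one_lt_pow (gcd_pos_of_pos_right i hm).ne' <| by
    obtain ⟨k, rfl⟩ := ha; omega
  have hsq (k : ℕ) : a ^ (2 * k) - 1 = (a ^ k - 1) * (a ^ k + 1) := by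
    rw [two_mul, pow_add, mul_self_tsub_one, mul_comm]
  have key : (a ^ d - 1) * (a ^ d + 1) = (a ^ d - 1) * gcd (a ^ m - 1) (a ^ i + 1) := by
    calc (a ^ d - 1) * (a ^ d + 1) = gcd (a ^ m - 1) (a ^ (2 * i) - 1) := by
          rw [pow_sub_one_gcd_pow_sub_one, gcd_comm m, gcd_two_mul_left_of_even_div_gcd hm h, hsq]
      _ = gcd (a ^ m - 1) (a ^ i - 1) * gcd (a ^ m - 1) (a ^ i + 1) := by
          rw [hsq, (coprime_pow_sub_one_pow_add_one ha ha0 hi).gcd_mul]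
      _ = (a ^ d - 1) * gcd (a ^ m - 1) (a ^ i + 1) := by
          rw [pow_sub_one_gcd_pow_sub_one, gcd_comm m]
  rw [gcd_comm, Nat.eq_of_mul_eq_mul_left (by omega) key]

end Nat

theorem FiniteField.ncard_range_pow (F : Type*) [Field F] [Fintype F] {n : ℕ} (hn : n ≠ 0) :
    (Set.range fun x : F => x ^ n).ncard
      = 1 + (Fintype.card F - 1) / (Fintype.card F - 1).gcd n := by
  have hrange : (Set.range fun x : F => x ^ n)
      = insert 0 (Units.val '' ((powMonoidHom n : Fˣ →* Fˣ).range : Set Fˣ)) := by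
    ext y
    simp only [Set.mem_range, MonoidHom.coe_range, Set.mem_insert_iff, Set.mem_image,
      powMonoidHom_apply, exists_exists_eq_and, Units.val_pow_eq_pow_val]
    constructor
    · rintro ⟨x, rfl⟩
      by_cases hx : x = 0
      · simp [hx, hn]
      · exact Or.inr ⟨Units.mk0 x hx, rfl⟩
    · rintro (rfl | ⟨u, rfl⟩)
      · exact ⟨0, zero_pow hn⟩
      · exact ⟨u, rfl⟩
  rw [hrange, Set.ncard_insert_of_notMem, Set.ncard_image_of_injective _ Units.val_injective,
    ← Nat.card_coe_set_eq, SetLike.coe_sort_coe, IsCyclic.card_powMonoidHom_range, Nat.card_units,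
    Nat.card_eq_fintype_card, add_comm]
  rintro ⟨u, -, hu⟩
  exact u.ne_zero hu

theorem gold_image_zero_even_general (m i d : ℕ) (hm : 0 < m)
    (hd : d = Nat.gcd i m) (hdiv : Even (m / d))
    (F : Type*) [Field F] [Fintype F] (hF : Fintype.card F = 2 ^ m) :
    ((Set.range fun x : F => x ^ (2 ^ i + 1)).ncard : ℚ) =
      1 + (2 ^ m - 1) / (2 ^ d + 1) := by
  subst hd
  have hgcd := Nat.gcd_pow_add_one_pow_sub_one even_two two_ne_zero hm hdiv
  have hdvd : 2 ^ Nat.gcd i m + 1 ∣ 2 ^ m - 1 := hgcd ▸ Nat.gcd_dvd_right _ _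
  rw [FiniteField.ncard_range_pow F (Nat.succ_ne_zero _), hF, Nat.gcd_comm, hgcd,
    Nat.cast_add, Nat.cast_div hdvd (by positivity), Nat.cast_sub Nat.one_le_two_pow]
  push_cast
  rfl

/-- For `q = 2^m`, `f(x) = x^(2^i+1)` with `0 ≤ i < m`, `d = gcd(i, m)` and `m/d` even,
the image set `I_f(0) = {f(x) : x ∈ F_q}` has cardinality `1 + (q−1)/(2^d+1)`. -/
theorem gold_image_zero_even (m i d : ℕ) (hm : 0 < m) (hi : i < m)
    (hd : d = Nat.gcd i m) (hdiv : Even (m / d))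
    (F : Type*) [Field F] [Fintype F] (hF : Fintype.card F = 2 ^ m) :
    ((Set.range fun x : F => x ^ (2 ^ i + 1)).ncard : ℚ) =
      1 + (2 ^ m - 1) / (2 ^ d + 1) :=
  gold_image_zero_even_general m i d hm hd hdiv F hF
end

section
/- Let m be an even positive integer and q = 2^m. Then for every t in F_q^*, the set {x^(2^(m/2)+1) + t·x : x ∈ F_q} has cardinality (2^m + 2^(m/2))/2. -/
/-!
Write `q = 2 ^ (m / 2)`, so `|F| = q ^ 2`. The substitution `x = t ^ q * y` turns
`x ^ (q + 1) + t * x` into `t ^ (q + 1) * (y ^ (q + 1) + y)`, so we may take `t = 1`.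
With the conjugation `y ↦ y ^ q`, `g y = y ^ (q + 1) + y` is `y * ȳ + y`. If `g y = g z`, then
conjugating shows `y - z` is fixed by conjugation, and the difference factors as
`(y - z) * (y + z̄ + 1)`; so each fibre of `g` is `{z, σ z}` with `σ z = -z̄ - 1`, and
`2 * |im g| = |F| + |Fix σ|`. The fixed points of `σ` form the fibre over `-1` of the trace
`z ↦ z ^ q + z`. That fibre has `q` elements: the trace maps into `{c | c ^ q = c}`, this set and
the kernel both have at most `q` elements, and `|ker| * |im| = q ^ 2`.
-/

open Finset Polynomial

theorem two_mul_ncard_range_eq {α β : Type*} [Fintype α] [DecidableEq α] (g : α → β)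
    (σ : α → α) (hg : ∀ y z, g y = g z ↔ y = z ∨ y = σ z) :
    2 * (Set.range g).ncard = Fintype.card α + #{z | σ z = z} := by
  classical
  have hfiber (z : α) : #{y | g y = g z} + #{y | σ y = y ∧ g y = g z} = 2 := by
    have hfib : ({y | g y = g z} : Finset α) = {z, σ z} := by ext y; simp [hg]
    by_cases hz : σ z = z
    · have hfix : ({y | σ y = y ∧ g y = g z} : Finset α) = {z} := by
        ext y; simp only [mem_filter, mem_univ, true_and, mem_singleton, hg, hz, or_self]
        constructor
        · exact fun h => h.2
        · rintro rfl; exact ⟨hz, rfl⟩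
      simp [hfib, hfix, hz]
    · have hσσ : σ (σ z) = z := by
        have := (hg z (σ z)).mp ((hg (σ z) z).mpr (Or.inr rfl)).symm
        tauto
      have hfix : ({y | σ y = y ∧ g y = g z} : Finset α) = ∅ := by
        ext y; simp only [mem_filter, mem_univ, true_and, hg, notMem_empty, iff_false]
        rintro ⟨hy, rfl | rfl⟩
        · exact hz hy
        · exact hz (hσσ.symm.trans hy).symm
      rw [hfib, hfix, card_pair (Ne.symm hz), card_empty]
  have hrange : Set.range g = ↑(univ.image g) := by simp
  rw [hrange, Set.ncard_coe_finset, ← card_univ, card_eq_sum_card_image g univ,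
    card_eq_sum_card_fiberwise (f := g) (t := univ.image g)
      fun z _ => mem_image_of_mem g (mem_univ z),
    ← sum_add_distrib, mul_comm, ← smul_eq_mul, ← sum_const]
  refine sum_congr rfl fun w hw => ?_
  obtain ⟨z, -, rfl⟩ := mem_image.mp hw
  rw [← hfiber z, filter_filter]

theorem mul_map_add_self_eq_iff {R : Type*} [CommRing R] [NoZeroDivisors R] (φ : R →+* R)
    (hφ : ∀ x, φ (φ x) = x) {y z : R} :
    y * φ y + y = z * φ z + z ↔ y = z ∨ y = -φ z - 1 := by
  constructor
  · intro h
    have hconj : φ y - φ z = y - z := by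
      have := congrArg φ h
      simp only [map_add, map_mul, hφ] at this
      linear_combination this - h
    have hprod : (y - z) * (y + φ z + 1) = 0 := by linear_combination h - y * hconj
    rcases mul_eq_zero.mp hprod with hyz | hyz
    · exact Or.inl (sub_eq_zero.mp hyz)
    · exact Or.inr (by linear_combination hyz)
  · rintro (rfl | rfl)
    · rfl
    · simp only [map_sub, map_neg, map_one, hφ]
      ring

theorem card_filter_pow_add_mul_eq_zero_le {R : Type*} [CommRing R] [IsDomain R] [Fintype R]
    [DecidableEq R] {n : ℕ} (hn : 2 ≤ n) (a : R) : #{z : R | z ^ n + a * z = 0} ≤ n := by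
  have hlt : (C a * X).degree < (n : WithBot ℕ) :=
    (degree_C_mul_X_le a).trans_lt (by exact_mod_cast hn)
  have hmonic : (X ^ n + C a * X).Monic := monic_X_pow_add hlt
  have hdeg : (X ^ n + C a * X).natDegree = n := by
    rw [natDegree_add_eq_left_of_degree_lt (by rwa [degree_X_pow]), natDegree_X_pow]
  calc _ ≤ (X ^ n + C a * X).natDegree := card_le_degree_of_subset_roots fun z hz => by
        simp only [Finset.mem_val, mem_filter, mem_univ, true_and] at hz
        simp [mem_roots hmonic.ne_zero, hz]
    _ = n := hdeg

section SquareOrderField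

variable {F : Type*} [Field F] [Fintype F] {q : ℕ}

theorem pow_pow_of_card_eq_mul_self (hF : Fintype.card F = q * q) (x : F) : (x ^ q) ^ q = x := by
  rw [← pow_mul, ← hF, FiniteField.pow_card]

theorem two_le_of_card_eq_mul_self (hF : Fintype.card F = q * q) : 2 ≤ q := by
  have := hF ▸ Fintype.one_lt_card (α := F)
  nlinarith

theorem ncard_range_pow_succ_add_mul_eq (hF : Fintype.card F = q * q) {t : F} (ht : t ≠ 0) :
    (Set.range fun x : F => x ^ (q + 1) + t * x).ncard =
      (Set.range fun x : F => x ^ (q + 1) + x).ncard := by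
  have htq : t ^ q ≠ 0 := pow_ne_zero q ht
  have hscale : (fun x : F => x ^ (q + 1) + t * x) ∘ (t ^ q * ·) =
      (t ^ (q + 1) * ·) ∘ fun y : F => y ^ (q + 1) + y := by
    funext y
    simp only [Function.comp_apply]
    rw [mul_pow, pow_succ (t ^ q), pow_pow_of_card_eq_mul_self hF, pow_succ t q]
    ring
  rw [← (mulLeft_bijective₀ _ htq).surjective.range_comp, hscale, Set.range_comp,
    Set.ncard_image_of_injective _ (mul_right_injective₀ (pow_ne_zero _ ht))]

variable {p k : ℕ} [Fact p.Prime] [CharP F p]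

theorem card_filter_pow_add_self_eq [DecidableEq F] (hF : Fintype.card F = p ^ k * p ^ k) {c : F}
    (hc : c ^ p ^ k = c) : #{z : F | z ^ p ^ k + z = c} = p ^ k := by
  have hq := two_le_of_card_eq_mul_self hF
  let T : F →+ F := (iterateFrobenius F p k).toAddMonoidHom + AddMonoidHom.id F
  have hT (z : F) : T z = z ^ p ^ k + z := rfl
  set K : Finset F := {c : F | c ^ p ^ k + (-1) * c = 0}
  have hK : #K ≤ p ^ k := card_filter_pow_add_mul_eq_zero_le hq (-1)
  have hker : #{z | T z = 0} ≤ p ^ k := by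
    simpa only [hT, one_mul] using card_filter_pow_add_mul_eq_zero_le hq (1 : F)
  have himage : univ.image T ⊆ K := by
    simp only [subset_iff, mem_image, mem_univ, true_and, forall_exists_index,
      forall_apply_eq_imp_iff, K, mem_filter, hT, add_pow_char_pow, pow_pow_of_card_eq_mul_self hF]
    intro z; ring
  have hfiber {w : F} (hw : w ∈ univ.image T) : #{z | T z = w} = #{z | T z = 0} := by
    simp only [mem_image, mem_univ, true_and] at hw
    exact AddMonoidHom.card_fiber_eq_of_mem_range T hw ⟨0, map_zero T⟩
  have hcount : p ^ k * p ^ k = #(univ.image T) * #{z | T z = 0} := by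
    rw [← hF, ← card_univ, card_eq_sum_card_image T univ, sum_congr rfl fun w hw => hfiber hw,
      sum_const, smul_eq_mul]
  have himage_card : #(univ.image T) = p ^ k := by
    have := card_le_card himage
    nlinarith
  have hcK : c ∈ univ.image T := by
    rw [eq_of_subset_of_card_le himage (by omega)]
    simp [K, hc]
  rw [← hfiber hcK] at hcount
  simpa only [hT] using Nat.eq_of_mul_eq_mul_left (by omega) (himage_card ▸ hcount).symm

theorem two_mul_ncard_range_pow_succ_add_self (hF : Fintype.card F = p ^ k * p ^ k) :
    2 * (Set.range fun x : F => x ^ (p ^ k + 1) + x).ncard = p ^ k * p ^ k + p ^ k := by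
  classical
  have hconj (x : F) : iterateFrobenius F p k (iterateFrobenius F p k x) = x :=
    pow_pow_of_card_eq_mul_self hF x
  have hg (y z : F) :
      y ^ (p ^ k + 1) + y = z ^ (p ^ k + 1) + z ↔ y = z ∨ y = -z ^ p ^ k - 1 := by
    simpa only [iterateFrobenius_def, ← pow_succ'] using
      mul_map_add_self_eq_iff (iterateFrobenius F p k) hconj (y := y) (z := z)
  have hfix : #{z : F | -z ^ p ^ k - 1 = z} = p ^ k := by
    refine (congrArg card (filter_congr fun z _ => ?_)).trans
      (card_filter_pow_add_self_eq hF (neg_one_pow_char_pow F p k))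
    constructor <;> intro h <;> linear_combination -h
  rw [two_mul_ncard_range_eq _ _ hg, hfix, hF]

end SquareOrderField

theorem gold_sqrt_image_nonzero_general (m : ℕ) (hme : Even m)
    (F : Type*) [Field F] [Fintype F] (hF : Fintype.card F = 2 ^ m) :
    ∀ t : F, t ≠ 0 →
      ((Set.range fun x : F => x ^ (2 ^ (m / 2) + 1) + t * x).ncard : ℚ) =
        (2 ^ m + 2 ^ (m / 2)) / 2 := by
  intro t ht
  obtain ⟨k, rfl⟩ := hme
  have hk : (k + k) / 2 = k := by omega
  have hF' : Fintype.card F = 2 ^ k * 2 ^ k := by rw [hF, pow_add]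
  have : CharP F 2 := charP_of_card_eq_prime_pow hF
  rw [hk, ncard_range_pow_succ_add_mul_eq hF' ht, eq_div_iff two_ne_zero, mul_comm, pow_add]
  exact_mod_cast two_mul_ncard_range_pow_succ_add_self hF'

/-- For `q = 2^m` with `m` even and positive, for every `t ∈ F_q^*` the set
`{x^(2^(m/2)+1) + t·x : x ∈ F_q}` has cardinality `(2^m + 2^(m/2))/2`. -/
theorem gold_sqrt_image_nonzero (m : ℕ) (hm : 0 < m) (hme : Even m)
    (F : Type*) [Field F] [Fintype F] (hF : Fintype.card F = 2 ^ m) :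
    ∀ t : F, t ≠ 0 →
      ((Set.range fun x : F => x ^ (2 ^ (m / 2) + 1) + t * x).ncard : ℚ) =
        (2 ^ m + 2 ^ (m / 2)) / 2 :=
  gold_sqrt_image_nonzero_general m hme F hF
end

section
/- Let m be an even positive integer, q = 2^m, and let Tr : F_q → F_{2^(m/2)} denote the relative trace map Tr(x) = x^(2^(m/2)) + x onto the subfield with 2^(m/2) elements. Define g(x) = x^(2^(m/2)+1) + x. Then for distinct y, z in F_q, g(y) = g(z) holds if and only if Tr(y) ≠ 1 and z = y + Tr(y) + 1. Consequently g is injective on the set of elements of F_q with relative trace 1 and two-to-one on its complement. -/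
/-!
The map `x ↦ x ^ (2 ^ (m / 2))` is a field involution `σ` of `F`, so `Tr x = σ x + x` and
`g x = σ x * x + x`. Write `z = y + c` with `c ≠ 0`. The collision `g z = g y` reads
`σ y * c + y * σ c + σ c * c + c = 0`; applying `σ` and subtracting gives `σ c = c`, after which the
equation factors as `c * (Tr y + c + 1) = 0`, i.e. `c = Tr y + 1` in characteristic `2`.
-/

section Involution

variable {K : Type*} [Field K] (σ : K →+* K)

def relTrace (x : K) : K := σ x + x

def relNormAdd (x : K) : K := σ x * x + x

variable {σ} (hσ : ∀ x, σ (σ x) = x)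
include hσ

theorem map_relTrace (x : K) : σ (relTrace σ x) = relTrace σ x := by
  simp only [relTrace, map_add, hσ, add_comm]

variable [CharP K 2]

theorem relNormAdd_add_eq_iff {y c : K} (hc : c ≠ 0) :
    relNormAdd σ (y + c) = relNormAdd σ y ↔ c = relTrace σ y + 1 := by
  have two : (2 : K) = 0 := CharTwo.two_eq_zero
  simp only [relNormAdd, relTrace, map_add]
  constructor
  · intro h
    have hE : σ y * c + y * σ c + σ c * c + c = 0 := by linear_combination h
    have hσE := congrArg σ hE
    simp only [map_add, map_mul, hσ, map_zero] at hσE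
    have hσc : σ c = c := by linear_combination hσE - hE
    have hfactor : c * (σ y + y + c + 1) = 0 := by rw [hσc] at hE; linear_combination hE
    have hsum := (mul_eq_zero.mp hfactor).resolve_left hc
    linear_combination hsum - (σ y + y + 1) * two
  · rintro rfl
    simp only [map_add, hσ, map_one]
    linear_combination (σ y + y + 1) * (σ y + y + 1) * two

theorem relNormAdd_eq_iff_of_ne {y z : K} (hyz : y ≠ z) :
    relNormAdd σ y = relNormAdd σ z ↔ relTrace σ y ≠ 1 ∧ z = y + relTrace σ y + 1 := by
  have two : (2 : K) = 0 := CharTwo.two_eq_zero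
  obtain ⟨c, rfl⟩ : ∃ c, z = y + c := ⟨z - y, by ring⟩
  have hc : c ≠ 0 := fun h => hyz (by rw [h, add_zero])
  rw [eq_comm, relNormAdd_add_eq_iff hσ hc]
  constructor
  · rintro rfl
    refine ⟨fun h1 => hc ?_, by ring⟩
    rw [h1]
    linear_combination two
  · rintro ⟨-, h⟩
    linear_combination h

theorem injOn_relNormAdd : Set.InjOn (relNormAdd σ) {y | relTrace σ y = 1} := by
  intro y hy z _ hyz
  by_contra hne
  exact ((relNormAdd_eq_iff_of_ne hσ hne).mp hyz).1 hy

theorem ncard_relNormAdd_fiber {y : K} (hy : relTrace σ y ≠ 1) :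
    {z | relTrace σ z ≠ 1 ∧ relNormAdd σ z = relNormAdd σ y}.ncard = 2 := by
  have two : (2 : K) = 0 := CharTwo.two_eq_zero
  have htrace : relTrace σ (y + relTrace σ y + 1) = relTrace σ y := by
    rw [relTrace, map_add, map_add, map_relTrace hσ, map_one]
    simp only [relTrace]
    linear_combination (σ y + y + 1) * two
  set y' := y + relTrace σ y + 1
  have hne : y ≠ y' := fun h => hy (by linear_combination -h - two)
  have hfiber : {z | relTrace σ z ≠ 1 ∧ relNormAdd σ z = relNormAdd σ y} = {y, y'} := by
    ext z
    simp only [Set.mem_ofPred_eq, Set.mem_insert_iff, Set.mem_singleton_iff]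
    constructor
    · rintro ⟨-, hz⟩
      by_cases hzy : z = y
      · exact Or.inl hzy
      · exact Or.inr ((relNormAdd_eq_iff_of_ne hσ (Ne.symm hzy)).mp hz.symm).2
    · rintro (rfl | rfl)
      · exact ⟨hy, rfl⟩
      · exact ⟨htrace ▸ hy, ((relNormAdd_eq_iff_of_ne hσ hne).mpr ⟨hy, rfl⟩).symm⟩
  rw [hfiber, Set.ncard_pair hne]

end Involution

theorem FiniteField.charP_two_of_card_eq_two_pow {F : Type*} [Field F] [Fintype F] {m : ℕ}
    (hF : Fintype.card F = 2 ^ m) : CharP F 2 := by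
  have h := FiniteField.cast_card_eq_zero F
  rw [hF, Nat.cast_pow] at h
  exact (CharP.charP_iff_prime_eq_zero Nat.prime_two).mpr
    (by exact_mod_cast eq_zero_of_pow_eq_zero h)

theorem FiniteField.pow_two_pow_half_pow_two_pow_half {F : Type*} [Field F] [Fintype F] {m : ℕ}
    (hF : Fintype.card F = 2 ^ m) (hme : Even m) (x : F) :
    (x ^ 2 ^ (m / 2)) ^ 2 ^ (m / 2) = x := by
  obtain ⟨k, rfl⟩ := hme
  rw [← pow_mul, ← pow_add, show (k + k) / 2 + (k + k) / 2 = k + k by omega, ← hF,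
    FiniteField.pow_card]

theorem g_collision_characterization_general (m : ℕ) (hme : Even m)
    (F : Type*) [Field F] [Fintype F] (hF : Fintype.card F = 2 ^ m)
    (Tr g : F → F) (hTr : ∀ x, Tr x = x ^ (2 ^ (m / 2)) + x)
    (hg : ∀ x, g x = x ^ (2 ^ (m / 2) + 1) + x) :
    (∀ y z : F, y ≠ z → (g y = g z ↔ Tr y ≠ 1 ∧ z = y + Tr y + 1)) ∧
      Set.InjOn g {y : F | Tr y = 1} ∧
      (∀ y : F, Tr y ≠ 1 → {z : F | Tr z ≠ 1 ∧ g z = g y}.ncard = 2) := by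
  have := FiniteField.charP_two_of_card_eq_two_pow hF
  set σ := iterateFrobenius F 2 (m / 2)
  have hσ : ∀ x, σ (σ x) = x := by
    simpa only [σ, iterateFrobenius_def] using FiniteField.pow_two_pow_half_pow_two_pow_half hF hme
  obtain rfl : Tr = relTrace σ := funext fun x => by rw [hTr, relTrace, iterateFrobenius_def]
  obtain rfl : g = relNormAdd σ := funext fun x => by
    rw [hg, relNormAdd, iterateFrobenius_def, pow_succ]
  exact ⟨fun y z => relNormAdd_eq_iff_of_ne hσ, injOn_relNormAdd hσ,
    fun y => ncard_relNormAdd_fiber hσ⟩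

/-- For `q = 2^m` with `m` even and positive, let `Tr(x) = x^(2^(m/2)) + x` be the
relative trace onto the subfield with `2^(m/2)` elements, and `g(x) = x^(2^(m/2)+1) + x`.
Then for distinct `y, z`, `g(y) = g(z)` iff `Tr(y) ≠ 1` and `z = y + Tr(y) + 1`.
Consequently `g` is injective on the elements of relative trace `1` and two-to-one on
the complement. -/
theorem g_collision_characterization (m : ℕ) (hm : 0 < m) (hme : Even m)
    (F : Type*) [Field F] [Fintype F] (hF : Fintype.card F = 2 ^ m)
    (Tr g : F → F) (hTr : ∀ x, Tr x = x ^ (2 ^ (m / 2)) + x)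
    (hg : ∀ x, g x = x ^ (2 ^ (m / 2) + 1) + x) :
    (∀ y z : F, y ≠ z → (g y = g z ↔ Tr y ≠ 1 ∧ z = y + Tr y + 1)) ∧
      Set.InjOn g {y : F | Tr y = 1} ∧
      (∀ y : F, Tr y ≠ 1 → {z : F | Tr z ≠ 1 ∧ g z = g y}.ncard = 2) :=
  g_collision_characterization_general m hme F hF Tr g hTr hg
end

section
/- Let q = 2^m with m even and let n ≥ 1 be an integer. Then there exists a Kakeya set K in F_q^n such that |K| < (2q/(q + √q − 2)) · ((q + √q)/2)^n. -/
/-!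
Write `q = s²` with `s = 2^(m/2)`. For a direction `x` whose last nonzero coordinate is `x j`,
the line through `y` with `y i = (x i / x j)^(s+1)` for `i < j` (and `y i = 0` otherwise) has at
the point with `j`-th coordinate `τ` the coordinates `u^(s+1) + τ u` (`u = x i / x j`) for `i < j`
and `0` beyond `j`. So the union over `j` and `τ` of the boxes of such points is a Kakeya set,
of size at most `q · Σ_{j<n} A^j` when every slice `{u^(s+1) + τ u}` has at most `A` elements.

The slice map `u ↦ u^(s+1) + τ u` is invariant under `σ u = a u^s + τ a` (with `a^(s+1) = 1`,
`(τ a)^s = τ`), an affine-Frobenius map with at most `s` fixed points; a fibre without a fixed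
point of `σ` has at least two elements, whence `2 |slice| ≤ q + s`, i.e. `A = (q + s)/2`.
-/

open Finset Polynomial

theorem two_mul_card_image_le_card_add_card_fixedPoints {α β : Type*} [Fintype α]
    [DecidableEq α] [DecidableEq β] (f : α → β) (σ : α → α) (hf : ∀ u, f (σ u) = f u) :
    2 * #(univ.image f) ≤ Fintype.card α + #{u | σ u = u} := by
  have h_fiber : ∀ b ∈ univ.image f, 2 ≤ #{u | f u = b} + #{u | σ u = u ∧ f u = b} := by
    intro b hb
    obtain ⟨u, -, rfl⟩ := mem_image.mp hb
    by_cases hfix : ∃ v, σ v = v ∧ f v = f u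
    · obtain ⟨v, hv⟩ := hfix
      have h₁ : 0 < #{w | f w = f u} := card_pos.mpr ⟨v, by simp [hv.2]⟩
      have h₂ : 0 < #{w | σ w = w ∧ f w = f u} := card_pos.mpr ⟨v, by simpa using hv⟩
      omega
    · have h₂ : 1 < #{w | f w = f u} :=
        one_lt_card.mpr ⟨u, by simp, σ u, by simp [hf], fun h => hfix ⟨u, h.symm, rfl⟩⟩
      omega
  have h_sum := sum_le_sum h_fiber
  rw [sum_add_distrib, sum_const, smul_eq_mul, mul_comm] at h_sum
  have hα : ∑ b ∈ univ.image f, #{u | f u = b} = Fintype.card α :=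
    (card_eq_sum_card_image f univ).symm
  have hfix : ∑ b ∈ univ.image f, #{u | σ u = u ∧ f u = b} = #{u | σ u = u} := by
    rw [card_eq_sum_card_fiberwise (fun u _ => mem_image_of_mem f (mem_univ u))]
    simp only [filter_filter]
  omega

theorem card_le_of_forall_mul_pow_add_eq_self {R : Type*} [CommRing R] [IsDomain R] {s : ℕ}
    (hs : 2 ≤ s) {a : R} (ha : a ≠ 0) (b : R) {Z : Finset R}
    (hZ : ∀ u ∈ Z, a * u ^ s + b = u) : #Z ≤ s := by
  set p : R[X] := C a * X ^ s - X + C b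
  have hp : p ≠ 0 := by
    intro h
    have := congrArg (coeff · s) h
    simp [p, coeff_X, coeff_C, show 1 ≠ s by omega, show s ≠ 0 by omega] at this
    exact ha this
  have hdeg : p.natDegree ≤ s := by
    simp only [p]; compute_degree; omega
  refine (card_le_degree_of_subset_roots fun u hu => ?_).trans hdeg
  rw [mem_roots hp, IsRoot, eval_add, eval_sub, eval_mul, eval_pow, eval_C, eval_X, eval_C]
  linear_combination hZ u hu

section FiniteField

variable {F : Type*} [Field F] [Fintype F]

theorem exists_pow_succ_eq_one_and_mul_pow_eq {s : ℕ} (hq : Fintype.card F = s * s)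
    (hs : s ≠ 0) (τ : F) : ∃ a : F, a ^ (s + 1) = 1 ∧ (τ * a) ^ s = τ := by
  by_cases hτ : τ = 0
  · exact ⟨1, one_pow _, by simp [hτ, hs]⟩
  refine ⟨τ ^ (s - 1), ?_, ?_⟩
  · obtain ⟨k, rfl⟩ := Nat.exists_eq_add_one_of_ne_zero hs
    rw [← pow_mul, show (k + 1 - 1) * (k + 1 + 1) = Fintype.card F - 1 by
      rw [hq, Nat.add_sub_cancel]; ring_nf; omega]
    exact FiniteField.pow_card_sub_one_eq_one τ hτ
  · rw [← pow_succ', Nat.sub_add_cancel (Nat.one_le_iff_ne_zero.mpr hs), ← pow_mul, ← hq,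
      FiniteField.pow_card]

variable [CharP F 2] {r : ℕ}

theorem pow_succ_add_mul_comp_eq (hq : Fintype.card F = 2 ^ r * 2 ^ r) {τ a : F}
    (ha : a ^ (2 ^ r + 1) = 1) (hτa : (τ * a) ^ 2 ^ r = τ) (u : F) :
    (a * u ^ 2 ^ r + τ * a) ^ (2 ^ r + 1) + τ * (a * u ^ 2 ^ r + τ * a) =
      u ^ (2 ^ r + 1) + τ * u := by
  have hfrob : (a * u ^ 2 ^ r + τ * a) ^ 2 ^ r = a ^ 2 ^ r * u + τ := by
    rw [add_pow_char_pow, hτa, mul_pow, ← pow_mul, ← hq, FiniteField.pow_card]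
  have h2 : (2 : F) = 0 := CharTwo.two_eq_zero
  rw [pow_succ, hfrob]
  linear_combination (u ^ 2 ^ r * u + τ * u) * ha + (a * τ * u ^ 2 ^ r + a * τ ^ 2) * h2

theorem two_mul_card_image_pow_succ_add_mul_le [DecidableEq F]
    (hq : Fintype.card F = 2 ^ r * 2 ^ r) (hr : r ≠ 0) (τ : F) :
    2 * #(univ.image fun u : F => u ^ (2 ^ r + 1) + τ * u) ≤ 2 ^ r * 2 ^ r + 2 ^ r := by
  obtain ⟨a, ha, hτa⟩ := exists_pow_succ_eq_one_and_mul_pow_eq hq (by positivity) τ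
  have ha0 : a ≠ 0 := by rintro rfl; simp at ha
  calc _ ≤ Fintype.card F + #{u : F | a * u ^ 2 ^ r + τ * a = u} :=
        two_mul_card_image_le_card_add_card_fixedPoints _ _
          (pow_succ_add_mul_comp_eq hq ha hτa)
    _ ≤ 2 ^ r * 2 ^ r + 2 ^ r := by
        rw [hq]
        gcongr
        refine card_le_of_forall_mul_pow_add_eq_self ?_ ha0 _ fun u hu => (mem_filter.mp hu).2
        exact Nat.le_self_pow hr 2

end FiniteField

section KakeyaConstruction

variable {F : Type*} [Fintype F] [DecidableEq F]

def kakeyaSlice [CommRing F] (g : F → F) (τ : F) : Finset F :=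
  univ.image fun u => g u + τ * u

def kakeyaPiece [CommRing F] {n : ℕ} (g : F → F) (j : Fin n) (τ : F) : Finset (Fin n → F) :=
  {z | z j = τ ∧ (∀ i, j < i → z i = 0) ∧ ∀ i < j, z i ∈ kakeyaSlice g τ}

def kakeyaSet [CommRing F] (g : F → F) (n : ℕ) : Finset (Fin n → F) :=
  univ.biUnion fun p : Fin n × F => kakeyaPiece g p.1 p.2

theorem line_point_mem_kakeyaPiece [Field F] {n : ℕ} (g : F → F) {x : Fin n → F} {j : Fin n}
    (hj : x j ≠ 0) (hzero : ∀ i, j < i → x i = 0) (t : F) :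
    (fun i => (if i < j then g (x i / x j) else 0) + t * x i) ∈ kakeyaPiece g j (t * x j) := by
  simp only [kakeyaPiece, mem_filter, mem_univ, true_and, lt_irrefl, if_false, zero_add]
  refine ⟨fun i hji => ?_, fun i hij => ?_⟩
  · simp [hji.not_gt, hzero i hji]
  · rw [if_pos hij]
    exact mem_image.mpr ⟨x i / x j, mem_univ _, by field_simp⟩

theorem exists_forall_add_mul_mem_kakeyaSet [Field F] {n : ℕ} (g : F → F) (hn : 0 < n)
    (x : Fin n → F) :
    ∃ y : Fin n → F, ∀ t : F, (fun i => y i + t * x i) ∈ kakeyaSet g n := by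
  by_cases hx : x = 0
  · refine ⟨0, fun t => mem_biUnion.mpr ⟨(⟨0, hn⟩, 0), mem_univ _, ?_⟩⟩
    simp [kakeyaPiece, hx, Fin.lt_def]
  have hsupp : ({i | x i ≠ 0} : Finset (Fin n)).Nonempty := by
    simpa [Finset.Nonempty, Function.ne_iff] using hx
  set j := ({i | x i ≠ 0} : Finset (Fin n)).max' hsupp
  have hj : x j ≠ 0 := by simpa using max'_mem _ hsupp
  have hzero : ∀ i, j < i → x i = 0 := fun i hji => by
    by_contra hi
    exact hji.not_ge (le_max' _ i (by simpa using hi))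
  exact ⟨_, fun t => mem_biUnion.mpr ⟨(j, t * x j), mem_univ _,
    line_point_mem_kakeyaPiece g hj hzero t⟩⟩

theorem card_kakeyaPiece_le [CommRing F] {n : ℕ} (g : F → F) (j : Fin n) (τ : F) :
    #(kakeyaPiece g j τ) ≤ #(kakeyaSlice g τ) ^ (j : ℕ) := by
  let restrict : (Fin n → F) → Fin j → F := fun z i => z (Fin.castLE j.isLt.le i)
  have hmaps :
      ∀ z ∈ kakeyaPiece g j τ, restrict z ∈ Fintype.piFinset fun _ => kakeyaSlice g τ := by
    intro z hz
    simp only [kakeyaPiece, mem_filter, mem_univ, true_and] at hz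
    exact Fintype.mem_piFinset.mpr fun i => hz.2.2 _ (by simp [Fin.lt_def])
  have hinj : Set.InjOn restrict (kakeyaPiece g j τ) := by
    intro z hz w hw hzw
    simp only [kakeyaPiece, coe_filter, mem_univ, true_and, Set.mem_ofPred_eq] at hz hw
    funext i
    rcases lt_trichotomy i j with h | rfl | h
    · exact congrFun hzw ⟨i, h⟩
    · rw [hz.1, hw.1]
    · rw [hz.2.1 i h, hw.2.1 i h]
  simpa using card_le_card_of_injOn restrict hmaps hinj

theorem card_kakeyaSet_le [CommRing F] (g : F → F) (n : ℕ) {A : ℝ}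
    (hA : ∀ τ, (#(kakeyaSlice g τ) : ℝ) ≤ A) :
    (#(kakeyaSet g n) : ℝ) ≤ Fintype.card F * ∑ k ∈ range n, A ^ k := by
  calc (#(kakeyaSet g n) : ℝ) ≤ ∑ p : Fin n × F, (#(kakeyaPiece g p.1 p.2) : ℝ) := by
        exact_mod_cast card_biUnion_le
    _ ≤ ∑ p : Fin n × F, A ^ (p.1 : ℕ) := by
        gcongr with p
        calc (#(kakeyaPiece g p.1 p.2) : ℝ) ≤ (#(kakeyaSlice g p.2) : ℝ) ^ (p.1 : ℕ) := by
              exact_mod_cast card_kakeyaPiece_le g p.1 p.2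
          _ ≤ A ^ (p.1 : ℕ) := by gcongr; exact hA p.2
    _ = Fintype.card F * ∑ k ∈ range n, A ^ k := by
        rw [Fintype.sum_prod_type, ← Fin.sum_univ_eq_sum_range, mul_sum]
        simp [mul_comm]

end KakeyaConstruction

theorem mul_geom_sum_lt_div_mul_pow {q A : ℝ} (hq : 0 < q) (hA : 1 < A) (n : ℕ) :
    q * ∑ k ∈ range n, A ^ k < q / (A - 1) * A ^ n := by
  rw [geom_sum_eq hA.ne', div_mul_eq_mul_div, mul_div_assoc]
  gcongr
  linarith

/-- For `q = 2^m` with `m` even (and positive) and `n ≥ 1`, there is a Kakeya set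
`K ⊆ F_q^n` with `|K| < (2q/(q + √q − 2)) · ((q + √q)/2)^n`, where `√q = 2^(m/2)`. -/
theorem kakeya_upper_bound_even_power (m n : ℕ) (hm : 0 < m) (hme : Even m) (hn : 1 ≤ n)
    (F : Type*) [Field F] [Fintype F] (hF : Fintype.card F = 2 ^ m) :
    ∃ K : Set (Fin n → F),
      (∀ x : Fin n → F, ∃ y : Fin n → F, ∀ t : F, (fun i => y i + t * x i) ∈ K) ∧
      (K.ncard : ℝ) <
        2 * 2 ^ m / ((2 : ℝ) ^ m + 2 ^ (m / 2) - 2) *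
          (((2 : ℝ) ^ m + 2 ^ (m / 2)) / 2) ^ n := by
  classical
  obtain ⟨r, rfl⟩ := hme
  have : CharP F 2 := charP_of_card_eq_prime_pow hF
  have hq : Fintype.card F = 2 ^ r * 2 ^ r := by rw [hF, pow_add]
  have hr : (r + r) / 2 = r := by omega
  let g : F → F := (· ^ (2 ^ r + 1))
  set A : ℝ := ((2 : ℝ) ^ (r + r) + 2 ^ r) / 2
  have hslice : ∀ τ : F, (#(kakeyaSlice g τ) : ℝ) ≤ A := fun τ => by
    have := two_mul_card_image_pow_succ_add_mul_le hq (by omega) τ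
    rw [le_div_iff₀' two_pos, pow_add]
    exact_mod_cast this
  have hA : 1 < A := by
    have : (2 : ℝ) ≤ 2 ^ r := le_self_pow₀ one_le_two (by omega)
    simp only [A, pow_add]
    nlinarith
  refine ⟨kakeyaSet g n, by simpa only [mem_coe] using exists_forall_add_mul_mem_kakeyaSet g hn, ?_⟩
  rw [Set.ncard_coe_finset, hr]
  calc _ ≤ (2 : ℝ) ^ (r + r) * ∑ k ∈ range n, A ^ k := by
        simpa [hF] using card_kakeyaSet_le g n hslice
    _ < 2 ^ (r + r) / (A - 1) * A ^ n := mul_geom_sum_lt_div_mul_pow (by positivity) hA n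
    _ = _ := by
        congr 1
        simp only [A]
        field_simp
end

section
/- Let q = 2^m, let t ∈ F_q^*, and define g_t(x) = x^4 + x^3 + t·x on F_q. Let ω_t(3) denote the number of elements y ∈ F_q having exactly three preimages under g_t. If the absolute trace Tr(t) = 0, then ω_t(3) = 1; if Tr(t) = 1, then ω_t(3) = 0. -/
/-!
In characteristic two, two distinct points `a ≠ b` of a fibre of `g_t` satisfy
`a b = (a + b)³ + (a + b)² + t`, and by Vieta three distinct points `a, b, c` force the fourth
root `a + b + c + 1` of `x⁴ + x³ + t x + y`. So a fibre with exactly three points contains two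
points summing to `1`, and this pins the fibre down to the one over `t²`. Since
`x⁴ + x³ + t x + t² = (x + √t)² (x² + x + t)`, that fibre is `{√t}` together with the roots of
`x² + x = t`, which exist (and then are `r, r + 1`, both different from `√t` as `t ≠ 0`) exactly
when `Tr t = 0`, by additive Hilbert 90.
-/

section CommRing

variable {R : Type*} [CommRing R]

def quarticFiber (t y : R) : Set R := {x | x ^ 4 + x ^ 3 + t * x = y}

-- `quarticFiberCount t k` is the paper's `ω_t(k)`.
noncomputable def quarticFiberCount (t : R) (k : ℕ) : ℕ :=
  {y : R | (quarticFiber t y).ncard = k}.ncard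

theorem mem_quarticFiber {t y x : R} : x ∈ quarticFiber t y ↔ x ^ 4 + x ^ 3 + t * x = y :=
  Iff.rfl

end CommRing

section CharTwo

variable {F : Type*} [Field F] [CharP F 2]

def sqAddSelfHom (F : Type*) [Field F] [CharP F 2] : F →+ F where
  toFun x := x ^ 2 + x
  map_zero' := by ring
  map_add' x y := by rw [CharTwo.add_sq]; ring

theorem sq_add_self_eq_iff {r t : F} (hr : r ^ 2 + r = t) (x : F) :
    x ^ 2 + x = t ↔ x = r ∨ x = r + 1 := by
  have hfactor : x ^ 2 + x + t = (x + r) * (x + (r + 1)) := by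
    linear_combination (norm := ring_nf) -hr
    simp [CharTwo.ofNat_eq_mod]
  rw [← CharTwo.add_eq_zero (b := t), hfactor, mul_eq_zero, CharTwo.add_eq_zero,
    CharTwo.add_eq_zero]

theorem ker_sqAddSelfHom : ((sqAddSelfHom F).ker : Set F) = {0, 1} := by
  ext x
  simpa [sqAddSelfHom] using sq_add_self_eq_iff (r := (0 : F)) (by ring) x

variable {t y a b c : F}

theorem mul_eq_of_mem_quarticFiber (hab : a ≠ b) (ha : a ∈ quarticFiber t y)
    (hb : b ∈ quarticFiber t y) : a * b = (a + b) ^ 3 + (a + b) ^ 2 + t := by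
  rw [mem_quarticFiber] at ha hb
  have hfactor : (a + b) * (a * b + ((a + b) ^ 3 + (a + b) ^ 2 + t)) = 0 := by
    linear_combination (norm := ring_nf) ha + hb
    simp [CharTwo.ofNat_eq_mod]
  have hsum : a + b ≠ 0 := mt CharTwo.add_eq_zero.mp hab
  exact CharTwo.add_eq_zero.mp ((mul_eq_zero.mp hfactor).resolve_left hsum)

theorem add_add_add_one_mem_quarticFiber (hab : a ≠ b) (hac : a ≠ c) (hbc : b ≠ c)
    (ha : a ∈ quarticFiber t y) (hb : b ∈ quarticFiber t y) (hc : c ∈ quarticFiber t y) :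
    a + b + c + 1 ∈ quarticFiber t y := by
  have hmul_ab := mul_eq_of_mem_quarticFiber hab ha hb
  have hmul_ac := mul_eq_of_mem_quarticFiber hac ha hc
  have hmul_bc := mul_eq_of_mem_quarticFiber hbc hb hc
  rw [mem_quarticFiber] at ha ⊢
  -- Vieta: the elementary symmetric functions of `a, b, c` are polynomials in `a + b + c`.
  have he₂ : a * b + a * c + b * c = (a + b + c) ^ 2 + (a + b + c) := by
    have hfactor : (b + c) * (a * b + a * c + b * c + ((a + b + c) ^ 2 + (a + b + c))) = 0 := by
      linear_combination (norm := ring_nf) hmul_ab + hmul_ac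
      simp [CharTwo.ofNat_eq_mod]
    have hsum : b + c ≠ 0 := mt CharTwo.add_eq_zero.mp hbc
    exact CharTwo.add_eq_zero.mp ((mul_eq_zero.mp hfactor).resolve_left hsum)
  have he₃ : a * b * c = (a + b + c) ^ 3 + (a + b + c) + t := by
    linear_combination (norm := ring_nf) hmul_ab + hmul_ac + hmul_bc + (1 + (a + b + c)) * he₂
    simp [CharTwo.ofNat_eq_mod]
  have hcubic : a ^ 3 + (a + b + c) * a ^ 2 + ((a + b + c) ^ 2 + (a + b + c)) * a
      + ((a + b + c) ^ 3 + (a + b + c) + t) = 0 := by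
    linear_combination (norm := ring_nf) a * he₂ + he₃
    simp [CharTwo.ofNat_eq_mod]
  linear_combination (norm := ring_nf) (a + (a + b + c) + 1) * hcubic + ha
  simp [CharTwo.ofNat_eq_mod]

theorem eq_sq_of_mem_quarticFiber_of_add_eq_one (hab : a ≠ b) (hsum : a + b = 1)
    (ha : a ∈ quarticFiber t y) (hb : b ∈ quarticFiber t y) : y = t ^ 2 := by
  have hmul := mul_eq_of_mem_quarticFiber hab ha hb
  obtain rfl : b = a + 1 := by
    linear_combination (norm := ring_nf) hsum
    simp [CharTwo.ofNat_eq_mod]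
  rw [mem_quarticFiber] at ha
  linear_combination (norm := ring_nf) (a ^ 2 + t) * hmul - ha
  simp [CharTwo.ofNat_eq_mod]

theorem eq_sq_of_ncard_quarticFiber_eq_three (h : (quarticFiber t y).ncard = 3) :
    y = t ^ 2 := by
  obtain ⟨a, b, c, hab, hac, hbc, hfiber⟩ := Set.ncard_eq_three.mp h
  have ha : a ∈ quarticFiber t y := by simp [hfiber]
  have hb : b ∈ quarticFiber t y := by simp [hfiber]
  have hc : c ∈ quarticFiber t y := by simp [hfiber]
  have hd := add_add_add_one_mem_quarticFiber hab hac hbc ha hb hc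
  simp only [hfiber, Set.mem_insert_iff, Set.mem_singleton_iff] at hd
  rcases hd with hd | hd | hd
  · refine eq_sq_of_mem_quarticFiber_of_add_eq_one hbc ?_ hb hc
    linear_combination (norm := ring_nf) hd
    simp [CharTwo.ofNat_eq_mod]
  · refine eq_sq_of_mem_quarticFiber_of_add_eq_one hac ?_ ha hc
    linear_combination (norm := ring_nf) hd
    simp [CharTwo.ofNat_eq_mod]
  · refine eq_sq_of_mem_quarticFiber_of_add_eq_one hab ?_ ha hb
    linear_combination (norm := ring_nf) hd
    simp [CharTwo.ofNat_eq_mod]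

variable {s : F}

theorem quarticFiber_sq_eq_insert (hs : s ^ 2 = t) :
    quarticFiber t (t ^ 2) = insert s {x | x ^ 2 + x = t} := by
  ext x
  have hfactor : x ^ 4 + x ^ 3 + t * x + t ^ 2 = (x + s) ^ 2 * (x ^ 2 + x + t) := by
    linear_combination (norm := ring_nf) (x ^ 2 + x + t) * hs
    simp [CharTwo.ofNat_eq_mod]
  rw [mem_quarticFiber, ← CharTwo.add_eq_zero, hfactor, mul_eq_zero, pow_eq_zero_iff two_ne_zero,
    CharTwo.add_eq_zero, CharTwo.add_eq_zero]
  rfl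

theorem quarticFiberCount_three_of_sq_add_self_eq (hs : s ^ 2 = t) (ht : t ≠ 0) {r : F}
    (hr : r ^ 2 + r = t) : quarticFiberCount t 3 = 1 := by
  have hroots : {x | x ^ 2 + x = t} = ({r, r + 1} : Set F) := Set.ext (sq_add_self_eq_iff hr)
  have hs_notMem : s ∉ ({r, r + 1} : Set F) := by
    rw [← hroots]
    intro (hroot : s ^ 2 + s = t)
    have hs0 : s = 0 := by linear_combination hroot - hs
    exact ht (by rw [← hs, hs0, zero_pow two_ne_zero])
  have hfiber : (quarticFiber t (t ^ 2)).ncard = 3 := by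
    rw [quarticFiber_sq_eq_insert hs, hroots, Set.ncard_insert_of_notMem hs_notMem,
      Set.ncard_pair (by simp)]
  rw [quarticFiberCount, Set.ncard_eq_one]
  exact ⟨t ^ 2, Set.eq_singleton_iff_unique_mem.mpr
    ⟨hfiber, fun _ => eq_sq_of_ncard_quarticFiber_eq_three⟩⟩

theorem quarticFiberCount_three_of_forall_sq_add_self_ne (hs : s ^ 2 = t)
    (hr : ∀ r : F, r ^ 2 + r ≠ t) : quarticFiberCount t 3 = 0 := by
  have hfiber : quarticFiber t (t ^ 2) = {s} := by
    have hroots : {x | x ^ 2 + x = t} = (∅ : Set F) := Set.eq_empty_of_forall_notMem hr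
    rw [quarticFiber_sq_eq_insert hs, hroots, insert_empty_eq]
  suffices {y : F | (quarticFiber t y).ncard = 3} = ∅ by
    rw [quarticFiberCount, this, Set.ncard_empty]
  refine Set.eq_empty_of_forall_notMem fun y (hy : (quarticFiber t y).ncard = 3) => ?_
  rw [eq_sq_of_ncard_quarticFiber_eq_three hy, hfiber, Set.ncard_singleton] at hy
  exact absurd hy (by norm_num)

end CharTwo

section TraceZModTwo

variable {L : Type*} [Field L] [Finite L] [Algebra (ZMod 2) L]

theorem trace_sq (x : L) : Algebra.trace (ZMod 2) L (x ^ 2) = Algebra.trace (ZMod 2) L x := by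
  have hfrob :=
    Algebra.trace_eq_of_algEquiv (FiniteField.frobeniusAlgEquivOfAlgebraic (ZMod 2) L) x
  rwa [FiniteField.coe_frobeniusAlgEquivOfAlgebraic, ZMod.card] at hfrob

/-- Additive Hilbert 90: `x ↦ x ^ 2 + x` is two-to-one into the kernel of the trace, which has
the same size, so its image is the whole kernel. -/
theorem exists_sq_add_self_eq_iff_trace_eq_zero (x : L) :
    (∃ r, r ^ 2 + r = x) ↔ Algebra.trace (ZMod 2) L x = 0 := by
  have : CharP L 2 := charP_of_injective_algebraMap' (ZMod 2) 2
  set f := sqAddSelfHom L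
  set T := (Algebra.trace (ZMod 2) L).toAddMonoidHom
  have hle : f.range ≤ T.ker := by
    rintro _ ⟨r, rfl⟩
    change Algebra.trace (ZMod 2) L (r ^ 2 + r) = 0
    rw [map_add, trace_sq, CharTwo.add_self_eq_zero]
  have hf : Nat.card f.ker * Nat.card f.range = Nat.card L := by
    rw [← AddSubgroup.index_ker, AddSubgroup.card_mul_index]
  have hT : Nat.card T.ker * Nat.card T.range = Nat.card L := by
    rw [← AddSubgroup.index_ker, AddSubgroup.card_mul_index]
  have hf_ker : Nat.card f.ker = 2 := by
    rw [← SetLike.coe_sort_coe, ker_sqAddSelfHom, Nat.card_coe_set_eq, Set.ncard_pair zero_ne_one]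
  have hT_range : Nat.card T.range = 2 := by
    rw [AddMonoidHom.range_eq_top.mpr (Algebra.trace_surjective (ZMod 2) L),
      AddSubgroup.card_top, Nat.card_zmod]
  have hrange : f.range = T.ker := AddSubgroup.eq_of_le_of_card_ge hle (by lia)
  exact ⟨fun ⟨r, hr⟩ => hle ⟨r, hr⟩, fun hx => hrange.ge hx⟩

end TraceZModTwo

theorem omega_three_general (m : ℕ) (t : GaloisField 2 m) (ht : t ≠ 0) :
    (Algebra.trace (ZMod 2) (GaloisField 2 m) t = 0 →
      {y : GaloisField 2 m |
        {x : GaloisField 2 m | x ^ 4 + x ^ 3 + t * x = y}.ncard = 3}.ncard = 1) ∧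
    (Algebra.trace (ZMod 2) (GaloisField 2 m) t = 1 →
      {y : GaloisField 2 m |
        {x : GaloisField 2 m | x ^ 4 + x ^ 3 + t * x = y}.ncard = 3}.ncard = 0) := by
  obtain ⟨s, hs⟩ := surjective_frobenius (GaloisField 2 m) 2 t
  rw [frobenius_def] at hs
  refine ⟨fun htr => ?_, fun htr => ?_⟩
  · obtain ⟨r, hr⟩ := (exists_sq_add_self_eq_iff_trace_eq_zero t).mpr htr
    exact quarticFiberCount_three_of_sq_add_self_eq hs ht hr
  · refine quarticFiberCount_three_of_forall_sq_add_self_ne hs fun r hr => ?_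
    have htr0 := (exists_sq_add_self_eq_iff_trace_eq_zero t).mp ⟨r, hr⟩
    exact one_ne_zero (htr.symm.trans htr0)

/-- For `q = 2^m` and `t ∈ F_q^*`, with `g_t(x) = x^4 + x^3 + t·x`, the number `ω_t(3)`
of elements of `F_q` with exactly three preimages under `g_t` is `1` if the absolute
trace of `t` is `0`, and `0` if it is `1`. -/
theorem omega_three (m : ℕ) (hm : 0 < m) (t : GaloisField 2 m) (ht : t ≠ 0) :
    (Algebra.trace (ZMod 2) (GaloisField 2 m) t = 0 →
      {y : GaloisField 2 m |
        {x : GaloisField 2 m | x ^ 4 + x ^ 3 + t * x = y}.ncard = 3}.ncard = 1) ∧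
    (Algebra.trace (ZMod 2) (GaloisField 2 m) t = 1 →
      {y : GaloisField 2 m |
        {x : GaloisField 2 m | x ^ 4 + x ^ 3 + t * x = y}.ncard = 3}.ncard = 0) :=
  omega_three_general m t ht
end

section
/- Let q = 2^m with m odd, and define g_0(x) = x^4 + x^3 on F_q. Then for every integer k ≥ 1, the number ω_0(k) of elements of F_q with exactly k preimages under g_0 satisfies: ω_0(2) = q/2 and ω_0(k) = 0 for all k ≥ 1 with k ≠ 2. In particular, the image set {x^4 + x^3 : x ∈ F_q} has cardinality q/2. -/
/-!
Substituting `x = s³ - 1` gives `x⁴ + x³ = (s⁴ - s)³`. For `m` odd, `3 ∤ 2^m - 1`, so cubing is a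
bijection of `F`; and `s ↦ s⁴ - s` is additive in characteristic 2 with kernel `F ∩ 𝔽₄ = {0, 1}`.
Hence the fibres of `x ↦ x⁴ + x³` are the pairs `{s³ - 1, (s + 1)³ - 1}`, and the image has
`q / 2` elements.
-/

open Function Set

section Fibers

variable {α β : Type*} {f : α → β} {n : ℕ}

lemma ncard_fiber_eq_iff (h : ∀ a, {x | f x = f a}.ncard = n) {k : ℕ} (hk : k ≠ 0) {b : β} :
    {a | f a = b}.ncard = k ↔ b ∈ range f ∧ n = k := by
  by_cases hb : b ∈ range f
  · obtain ⟨a, rfl⟩ := hb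
    simp [h a]
  · have hempty : {a | f a = b} = ∅ := eq_empty_of_forall_notMem fun a ha => hb ⟨a, ha⟩
    simp [hempty, hb, hk.symm]

lemma setOf_ncard_fiber_eq_range (h : ∀ a, {x | f x = f a}.ncard = n) (hn : n ≠ 0) :
    {b | {a | f a = b}.ncard = n} = range f :=
  ext fun _ => (ncard_fiber_eq_iff h hn).trans (and_iff_left rfl)

lemma setOf_ncard_fiber_eq_empty (h : ∀ a, {x | f x = f a}.ncard = n) {k : ℕ} (hk : k ≠ 0)
    (hkn : k ≠ n) : {b | {a | f a = b}.ncard = k} = ∅ :=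
  eq_empty_of_forall_notMem fun _ hb => hkn ((ncard_fiber_eq_iff h hk).1 hb).2.symm

lemma Nat.card_eq_mul_ncard_range [Finite α] (h : ∀ a, {x | f x = f a}.ncard = n) :
    Nat.card α = n * (range f).ncard := by
  classical
  have := Fintype.ofFinite α
  rw [Nat.card_eq_fintype_card, ← Finset.card_univ, Finset.card_eq_sum_card_image f,
    Finset.sum_const_nat, ← Set.ncard_coe_finset, Finset.coe_image, Finset.coe_univ,
    Set.image_univ, mul_comm]
  rintro _ hb
  obtain ⟨a, -, rfl⟩ := Finset.mem_image.1 hb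
  rw [← h a, ← Set.ncard_coe_finset, Finset.coe_filter]
  simp

end Fibers

lemma Nat.coprime_three_two_pow_sub_one {m : ℕ} (hm : Odd m) : Nat.Coprime 3 (2 ^ m - 1) := by
  rw [Nat.Prime.coprime_iff_not_dvd Nat.prime_three]
  obtain ⟨k, rfl⟩ := hm
  have h4 : 4 ^ k % 3 = 1 := by simp [Nat.pow_mod]
  rw [pow_succ, pow_mul]
  norm_num
  omega

section CubeRoots

variable {F : Type*} [Field F]

lemma FiniteField.eq_one_of_pow_three_eq_one [Fintype F] (h : Nat.Coprime 3 (Fintype.card F - 1))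
    {a : F} (ha : a ^ 3 = 1) : a = 1 :=
  (pow_eq_one_iff_of_coprime h).1
    ⟨ha, FiniteField.pow_card_sub_one_eq_one a (by rintro rfl; simp at ha)⟩

lemma pow_three_injective (h3 : ∀ a : F, a ^ 3 = 1 → a = 1) : Injective fun a : F => a ^ 3 := by
  intro a b hab
  simp only at hab
  by_cases hb : b = 0
  · subst hb
    simpa using hab
  · rw [← div_eq_one_iff_eq hb]
    exact h3 _ (by rw [div_pow, hab, div_self (pow_ne_zero 3 hb)])

lemma pow_four_sub_self_eq_iff [CharP F 2] (h3 : ∀ a : F, a ^ 3 = 1 → a = 1) {a b : F} :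
    a ^ 4 - a = b ^ 4 - b ↔ a = b ∨ a = b + 1 := by
  have hfrob : (a - b) ^ 4 = a ^ 4 - b ^ 4 := sub_pow_char_pow (p := 2) (n := 2) a b
  rw [← sub_eq_zero, show a ^ 4 - a - (b ^ 4 - b) = (a - b) * ((a - b) ^ 3 - 1) by
    linear_combination -hfrob, mul_eq_zero, sub_eq_zero, sub_eq_zero, ← sub_eq_iff_eq_add']
  exact or_congr_right ⟨h3 _, fun h => by rw [h, one_pow]⟩

variable [Finite F]

lemma exists_eq_pow_three_sub_one (h3 : ∀ a : F, a ^ 3 = 1 → a = 1) (x : F) :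
    ∃ r : F, x = r ^ 3 - 1 := by
  obtain ⟨r, hr⟩ := (Finite.injective_iff_surjective.1 (pow_three_injective h3)) (x + 1)
  exact ⟨r, eq_sub_of_add_eq hr.symm⟩

lemma setOf_pow_four_add_pow_three_eq [CharP F 2] (h3 : ∀ a : F, a ^ 3 = 1 → a = 1) (r : F) :
    {x : F | x ^ 4 + x ^ 3 = (r ^ 3 - 1) ^ 4 + (r ^ 3 - 1) ^ 3} =
      {r ^ 3 - 1, (r + 1) ^ 3 - 1} := by
  have hcube (a b : F) : a ^ 3 = b ^ 3 ↔ a = b := (pow_three_injective h3).eq_iff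
  have hsubst (s : F) : (s ^ 3 - 1) ^ 4 + (s ^ 3 - 1) ^ 3 = (s ^ 4 - s) ^ 3 := by ring
  ext x
  obtain ⟨s, rfl⟩ := exists_eq_pow_three_sub_one h3 x
  simp only [mem_ofPred_eq, mem_insert_iff, mem_singleton_iff, hsubst, hcube, sub_left_inj,
    pow_four_sub_self_eq_iff h3]

lemma ncard_setOf_pow_four_add_pow_three_eq [CharP F 2] (h3 : ∀ a : F, a ^ 3 = 1 → a = 1)
    (x : F) : {y : F | y ^ 4 + y ^ 3 = x ^ 4 + x ^ 3}.ncard = 2 := by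
  obtain ⟨r, rfl⟩ := exists_eq_pow_three_sub_one h3 x
  rw [setOf_pow_four_add_pow_three_eq h3, ncard_pair]
  rw [Ne, sub_left_inj, (pow_three_injective h3).eq_iff]
  simp

end CubeRoots

/-- For `q = 2^m` with `m` odd and `g_0(x) = x^4 + x^3` on `F_q`: `ω_0(2) = q/2`,
`ω_0(k) = 0` for every `k ≥ 1` with `k ≠ 2`, and the image set `{x^4 + x^3 : x ∈ F_q}`
has cardinality `q/2`. -/
theorem omega_zero_m_odd (m : ℕ) (hm : Odd m)
    (F : Type*) [Field F] [Fintype F] (hF : Fintype.card F = 2 ^ m) :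
    (({y : F | {x : F | x ^ 4 + x ^ 3 = y}.ncard = 2}.ncard : ℚ) = 2 ^ m / 2) ∧
    (∀ k : ℕ, 1 ≤ k → k ≠ 2 →
      {y : F | {x : F | x ^ 4 + x ^ 3 = y}.ncard = k}.ncard = 0) ∧
    (((Set.range fun x : F => x ^ 4 + x ^ 3).ncard : ℚ) = 2 ^ m / 2) := by
  have := charP_of_card_eq_prime_pow hF
  have h3 : ∀ a : F, a ^ 3 = 1 → a = 1 := fun _ =>
    FiniteField.eq_one_of_pow_three_eq_one (hF ▸ Nat.coprime_three_two_pow_sub_one hm)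
  have hfiber := ncard_setOf_pow_four_add_pow_three_eq h3
  have hrange : ((range fun x : F => x ^ 4 + x ^ 3).ncard : ℚ) = 2 ^ m / 2 := by
    have := Nat.card_eq_mul_ncard_range hfiber
    rw [Nat.card_eq_fintype_card, hF] at this
    rw [eq_div_iff two_ne_zero]
    exact_mod_cast (this.trans (mul_comm _ _)).symm
  refine ⟨?_, fun k hk1 hk2 => ?_, hrange⟩
  · rw [setOf_ncard_fiber_eq_range hfiber two_ne_zero, hrange]
  · rw [setOf_ncard_fiber_eq_empty hfiber (by omega) hk2, ncard_empty]
end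

section
/- Let q = 2^m with m odd and let n ≥ 1 be an integer. Then there exists a Kakeya set K in F_q^n such that |K| < (8q/(5q + 2√q − 3)) · ((5q + 2√q + 5)/8)^n. -/
/-! In characteristic 2 the map `z ↦ z² + u z` satisfies `f (z + u) = f z`, so for `u ≠ 0` its image
`S u` has at most `q / 2` elements and `∑ u, |S u| ≤ q (q + 1) / 2`. For shifts `τ ∈ F^n`, the set
`⋃ t, {t} × ∏ i, S (t + τ i)` contains, for every `b`, the whole line through
`(0, (b i² + τ i b i)_i)` in direction `(1, b)`: its point at time `t` is
`(t, (b i² + (t + τ i) b i)_i)`. Rescaling covers all directions `(a, x)` with `a ≠ 0`, and `{0} × K`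
covers those with `a = 0` when `K ⊆ F^n` is Kakeya. Averaging over `τ` gives shifts with
`∑ t, ∏ i, |S (t + τ i)| ≤ q ((q + 1) / 2)^n`, so recursively `|K_n| ≤ 1 + q ∑_{k<n} ((q + 1) / 2)^k`,
which is below the claimed bound since `(q + 1) / 2 ≤ (5q + 2√q + 5) / 8`. -/

open Finset Matrix

theorem exists_sum_prod_add_le {G : Type*} [AddCommGroup G] [Fintype G] (c : G → ℝ) (n : ℕ) :
    ∃ τ : Fin n → G, ∑ t, ∏ i, c (t + τ i) ≤
      Fintype.card G * ((∑ u, c u) / Fintype.card G) ^ n := by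
  have hshift (t : G) : ∑ τ : Fin n → G, ∏ i, c (t + τ i) = (∑ u, c u) ^ n := by
    rw [← Fintype.prod_sum (fun (_ : Fin n) u => c (t + u)), prod_const, card_univ,
      Fintype.card_fin]
    exact congrArg (· ^ n) (Equiv.sum_comp (Equiv.addLeft t) c)
  have hsum : ∑ τ : Fin n → G, ∑ t, ∏ i, c (t + τ i) =
      ∑ _τ : Fin n → G, (Fintype.card G * ((∑ u, c u) / Fintype.card G) ^ n) := by
    rw [sum_comm, sum_congr rfl fun t _ => hshift t, sum_const, sum_const, card_univ, card_univ,
      Fintype.card_fun, Fintype.card_fin, nsmul_eq_mul, nsmul_eq_mul, Nat.cast_pow,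
      mul_left_comm, ← mul_pow, mul_div_cancel₀ _ (by positivity)]
  obtain ⟨τ, -, hτ⟩ := exists_le_of_sum_le univ_nonempty hsum.le
  exact ⟨τ, hτ⟩

def IsKakeya {R ι : Type*} [Semiring R] (K : Set (ι → R)) : Prop :=
  ∀ x : ι → R, ∃ y : ι → R, ∀ t : R, (fun i => y i + t * x i) ∈ K

theorem Matrix.vecCons_add_mul_vecCons {R : Type*} [Semiring R] {n : ℕ} (a b t : R)
    (y x : Fin n → R) :
    (fun i => vecCons a y i + t * vecCons b x i) = vecCons (a + t * b) fun i => y i + t * x i := by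
  funext i
  cases i using Fin.cases <;> simp

namespace Kakeya

variable {F : Type*} [Field F] [Fintype F] [DecidableEq F]

def quadraticValues (u : F) : Finset F := univ.image fun z => z ^ 2 + u * z

def step {n : ℕ} (τ : Fin n → F) (K : Finset (Fin n → F)) : Finset (Fin (n + 1) → F) :=
  (univ.biUnion fun t =>
    (Fintype.piFinset fun i => quadraticValues (t + τ i)).image (vecCons t)) ∪
      K.image (vecCons 0)

theorem isKakeya_step {n : ℕ} (τ : Fin n → F) {K : Finset (Fin n → F)}
    (hK : IsKakeya (K : Set (Fin n → F))) : IsKakeya (step τ K : Set (Fin (n + 1) → F)) := by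
  intro x
  obtain ⟨a, w, rfl⟩ : ∃ a w, x = vecCons a w := ⟨_, _, (cons_head_tail x).symm⟩
  by_cases ha : a = 0
  · obtain ⟨y, hy⟩ := hK w
    refine ⟨vecCons 0 y, fun t => ?_⟩
    rw [vecCons_add_mul_vecCons, ha, mul_zero, add_zero]
    exact mem_union_right _ (mem_image_of_mem _ (hy t))
  · set b : Fin n → F := fun i => w i / a
    refine ⟨vecCons 0 fun i => b i ^ 2 + τ i * b i, fun t => ?_⟩
    have hline : (fun i => b i ^ 2 + τ i * b i + t * w i) =
        fun i => b i ^ 2 + (t * a + τ i) * b i := by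
      funext i
      simp only [b]
      field_simp
      ring
    rw [vecCons_add_mul_vecCons, zero_add, hline]
    refine mem_union_left _ (mem_biUnion.2 ⟨t * a, mem_univ _, mem_image_of_mem _ ?_⟩)
    exact Fintype.mem_piFinset.2 fun i => mem_image_of_mem _ (mem_univ (b i))

theorem card_step_le {n : ℕ} (τ : Fin n → F) (K : Finset (Fin n → F)) :
    #(step τ K) ≤ ∑ t, ∏ i, #(quadraticValues (t + τ i)) + #K :=
  calc #(step τ K)
      ≤ ∑ t, #((Fintype.piFinset fun i => quadraticValues (t + τ i)).image (vecCons t)) +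
          #(K.image (vecCons 0)) :=
        (card_union_le _ _).trans (Nat.add_le_add_right card_biUnion_le _)
    _ ≤ ∑ t, ∏ i, #(quadraticValues (t + τ i)) + #K := by
        gcongr with t
        · exact card_image_le.trans (Fintype.card_piFinset _).le
        · exact card_image_le

variable [CharP F 2]

theorem two_mul_card_quadraticValues_le {u : F} (hu : u ≠ 0) :
    2 * #(quadraticValues u) ≤ Fintype.card F := by
  refine mul_card_image_le_card _ 2 fun v hv => ?_
  obtain ⟨z, -, rfl⟩ := mem_image.1 hv
  have hshift : (z + u) ^ 2 + u * (z + u) = z ^ 2 + u * z := by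
    linear_combination CharTwo.add_sq z u + CharTwo.add_self_eq_zero (u ^ 2)
  calc 2 = #{z, z + u} := (card_pair fun h => hu (left_eq_add.1 h)).symm
    _ ≤ _ := card_le_card <| by simp [insert_subset_iff, hshift]

theorem two_mul_sum_card_quadraticValues_le :
    2 * ∑ u : F, #(quadraticValues u) ≤ Fintype.card F * (Fintype.card F + 1) := by
  obtain ⟨q, hq⟩ : ∃ q, Fintype.card F = q + 1 := Nat.exists_eq_succ_of_ne_zero Fintype.card_ne_zero
  have hzero : #(quadraticValues (0 : F)) ≤ q + 1 := hq ▸ card_le_univ _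
  have hrest : ∑ u ∈ univ.erase (0 : F), 2 * #(quadraticValues u) ≤ q * (q + 1) := by
    simpa [card_erase_of_mem, hq] using sum_le_card_nsmul (univ.erase (0 : F)) _ _
      fun u hu => two_mul_card_quadraticValues_le (ne_of_mem_erase hu)
  rw [← add_sum_erase _ _ (mem_univ 0), mul_add, mul_sum, hq]
  linarith

theorem exists_isKakeya_card_le (n : ℕ) :
    ∃ K : Finset (Fin n → F), IsKakeya (K : Set (Fin n → F)) ∧
      (#K : ℝ) ≤ 1 + Fintype.card F * ∑ k ∈ range n, ((Fintype.card F + 1) / 2 : ℝ) ^ k := by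
  have hsum : (∑ u : F, (#(quadraticValues u) : ℝ)) / Fintype.card F ≤
      (Fintype.card F + 1) / 2 := by
    have h : 2 * ∑ u : F, (#(quadraticValues u) : ℝ) ≤ Fintype.card F * (Fintype.card F + 1) := by
      exact_mod_cast two_mul_sum_card_quadraticValues_le (F := F)
    rw [div_le_div_iff₀ (by positivity) two_pos]
    linarith
  set q : ℝ := (Fintype.card F : ℝ)
  induction n with
  | zero => exact ⟨univ, fun x => ⟨x, fun _ => mem_coe.2 (mem_univ _)⟩, by simp⟩
  | succ n ih =>
    obtain ⟨K, hK, hcard⟩ := ih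
    obtain ⟨τ, hτ⟩ := exists_sum_prod_add_le (fun u : F => (#(quadraticValues u) : ℝ)) n
    refine ⟨step τ K, isKakeya_step τ hK, ?_⟩
    calc (#(step τ K) : ℝ) ≤ ∑ t, ∏ i, (#(quadraticValues (t + τ i)) : ℝ) + #K := by
          exact_mod_cast card_step_le τ K
      _ ≤ q * ((q + 1) / 2) ^ n + (1 + q * ∑ k ∈ range n, ((q + 1) / 2) ^ k) := by
          gcongr
          exact hτ.trans (by gcongr)
      _ = 1 + q * ∑ k ∈ range (n + 1), ((q + 1) / 2) ^ k := by
          rw [sum_range_succ]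
          ring

end Kakeya

theorem one_add_mul_geom_sum_lt {q a b : ℝ} (ha : 0 ≤ a) (hab : a ≤ b) (hb : 1 < b)
    (hbq : b - 1 < q) (n : ℕ) : 1 + q * ∑ k ∈ range n, a ^ k < q * b ^ n / (b - 1) := by
  have hb1 : 0 < b - 1 := sub_pos.2 hb
  calc 1 + q * ∑ k ∈ range n, a ^ k ≤ 1 + q * ∑ k ∈ range n, b ^ k := by
        gcongr
        linarith
    _ = 1 + q * ((b ^ n - 1) / (b - 1)) := by rw [geom_sum_eq hb.ne']
    _ < q * b ^ n / (b - 1) := by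
        have hsplit : q * b ^ n / (b - 1) =
            1 + q * ((b ^ n - 1) / (b - 1)) + (q - (b - 1)) / (b - 1) := by
          field_simp
          ring
        linarith [div_pos (sub_pos.2 hbq) hb1]

theorem kakeya_upper_bound_odd_power_general (m n : ℕ)
    (F : Type*) [Field F] [Fintype F] (hF : Fintype.card F = 2 ^ m) :
    ∃ K : Set (Fin n → F),
      (∀ x : Fin n → F, ∃ y : Fin n → F, ∀ t : F, (fun i => y i + t * x i) ∈ K) ∧
      (K.ncard : ℝ) <
        8 * 2 ^ m / (5 * 2 ^ m + 2 * Real.sqrt (2 ^ m) - 3) *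
          ((5 * 2 ^ m + 2 * Real.sqrt (2 ^ m) + 5) / 8) ^ n := by
  classical
  have := charP_of_card_eq_prime_pow hF
  obtain ⟨K, hK, hcard⟩ := Kakeya.exists_isKakeya_card_le (F := F) n
  refine ⟨K, hK, ?_⟩
  have hq : (Fintype.card F : ℝ) = 2 ^ m := by exact_mod_cast hF
  rw [hq] at hcard
  set q : ℝ := 2 ^ m
  have hq1 : 1 ≤ q := one_le_pow₀ one_le_two
  have hs := Real.sq_sqrt (zero_le_one.trans hq1)
  have hs0 := Real.sqrt_nonneg q
  calc (K : Set (Fin n → F)).ncard = (#K : ℝ) := by rw [Set.ncard_coe_finset]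
    _ < q * ((5 * q + 2 * √q + 5) / 8) ^ n / ((5 * q + 2 * √q + 5) / 8 - 1) :=
        hcard.trans_lt <| one_add_mul_geom_sum_lt (by positivity) (by linarith) (by linarith)
          (by nlinarith) n
    _ = _ := by
        field_simp
        ring

/-- For `q = 2^m` with `m` odd and `n ≥ 1`, there is a Kakeya set `K ⊆ F_q^n` with
`|K| < (8q/(5q + 2√q − 3)) · ((5q + 2√q + 5)/8)^n`, where `√q` is the real square root. -/
theorem kakeya_upper_bound_odd_power (m n : ℕ) (hm : Odd m) (hn : 1 ≤ n)
    (F : Type*) [Field F] [Fintype F] (hF : Fintype.card F = 2 ^ m) :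
    ∃ K : Set (Fin n → F),
      (∀ x : Fin n → F, ∃ y : Fin n → F, ∀ t : F, (fun i => y i + t * x i) ∈ K) ∧
      (K.ncard : ℝ) <
        8 * 2 ^ m / (5 * 2 ^ m + 2 * Real.sqrt (2 ^ m) - 3) *
          ((5 * 2 ^ m + 2 * Real.sqrt (2 ^ m) + 5) / 8) ^ n :=
  kakeya_upper_bound_odd_power_general m n F hF
end

section
/- Let q be an odd prime power and n ≥ 1 an integer. Then there exists a Kakeya set K in F_q^n such that |K| < 2·(1 + 1/(q−1))·((q+1)/2)^n. -/
/-!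
Build the sets by induction on the dimension. Given a Kakeya set `K ⊆ F^n`, the set
`{(a - s²/4, s) : a ∈ Sⁿ, s ∈ F} ∪ (K × {0}) ⊆ F^(n+1)`, where `S` is the set of squares,
is again Kakeya: a line whose last direction coordinate `c` is nonzero, started at
`((x/c)², 0)`, has `j`-th coordinate `(x_j/c)² + t x_j = (x_j/c + tc/2)² - (tc)²/4`, while the
lines with `c = 0` are lines of `K`. Since `|S| ≤ (q+1)/2`, the sizes obey
`|K_{n+1}| ≤ q ((q+1)/2)ⁿ + |K_n|`, and summing the geometric series gives the bound.
-/

open Finset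

def IsKakeyaSet {ι F : Type*} [Semiring F] (K : Set (ι → F)) : Prop :=
  ∀ x : ι → F, ∃ y : ι → F, ∀ t : F, (fun i => y i + t * x i) ∈ K

namespace FiniteField

variable {F : Type*} [Field F] [Fintype F]

theorem ringChar_ne_two_of_odd_card (hq : Odd (Fintype.card F)) : ringChar F ≠ 2 := fun h => by
  have := even_card_of_char_two h
  rw [Nat.odd_iff] at hq
  omega

variable [DecidableEq F]

theorem two_mul_card_image_sq_le (hF : ringChar F ≠ 2) :
    2 * #(univ.image fun x : F => x ^ 2) ≤ Fintype.card F + 1 := by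
  set S := univ.image fun x : F => x ^ 2
  have hS0 : (0 : F) ∈ S := mem_image.2 ⟨0, mem_univ _, zero_pow two_ne_zero⟩
  have himage : (univ.erase (0 : F)).image (fun x => x ^ 2) = S.erase 0 := by
    ext a
    simp only [S, mem_image, mem_erase, mem_univ, and_true, true_and]
    constructor
    · rintro ⟨x, hx, rfl⟩
      exact ⟨pow_ne_zero 2 hx, x, rfl⟩
    · rintro ⟨ha, x, rfl⟩
      exact ⟨x, fun hx => ha (by rw [hx, zero_pow two_ne_zero]), rfl⟩
  -- every nonzero square `x²` has the two distinct square roots `x` and `-x`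
  have hfiber : 2 * #(S.erase 0) ≤ #(univ.erase (0 : F)) := by
    rw [← himage]
    refine mul_card_image_le_card _ _ fun b hb => ?_
    obtain ⟨x, hx, rfl⟩ := mem_image.1 hb
    have hx0 : x ≠ 0 := (mem_erase.1 hx).1
    have hroots : ({x, -x} : Finset F) ⊆ (univ.erase 0).filter fun z => z ^ 2 = x ^ 2 := by
      simp [insert_subset_iff, hx0]
    calc 2 = #({x, -x} : Finset F) :=
          (card_pair fun h => hx0 ((Ring.eq_self_iff_eq_zero_of_char_ne_two hF).1 h.symm)).symm
      _ ≤ _ := card_le_card hroots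
  rw [card_erase_of_mem hS0, card_erase_of_mem (mem_univ _), card_univ] at hfiber
  have : 0 < #S := card_pos.2 ⟨0, hS0⟩
  have : 0 < Fintype.card F := Fintype.card_pos
  omega

end FiniteField

namespace Kakeya

variable {F : Type*} [Field F] [Fintype F] [DecidableEq F]

def parabolicSet (n : ℕ) : Finset (Fin (n + 1) → F) :=
  ((Fintype.piFinset fun _ : Fin n => univ.image fun x : F => x ^ 2) ×ˢ univ).image
    fun p => Fin.snoc (fun i => p.1 i - p.2 ^ 2 / 4) p.2

theorem card_parabolicSet_le (n : ℕ) :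
    #(parabolicSet (F := F) n) ≤ Fintype.card F * #(univ.image fun x : F => x ^ 2) ^ n := by
  rw [mul_comm, ← Fintype.card_piFinset_const, ← card_univ, ← card_product]
  exact card_image_le

theorem line_mem_parabolicSet {n : ℕ} (h2 : (2 : F) ≠ 0) (x : Fin n → F) {c : F} (hc : c ≠ 0)
    (t : F) :
    (fun i => Fin.snoc (α := fun _ => F) (fun j => (x j / c) ^ 2) 0 i +
      t * Fin.snoc (α := fun _ => F) x c i) ∈ parabolicSet n := by
  refine mem_image.2 ⟨⟨fun j => (x j / c + t * c / 2) ^ 2, t * c⟩,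
    mem_product.2 ⟨Fintype.mem_piFinset.2 fun j => mem_image_of_mem _ (mem_univ _), mem_univ _⟩,
    funext fun i => Fin.lastCases ?_ (fun j => ?_) i⟩
  · simp
  · have h4 : (4 : F) ≠ 0 := by
      simpa [show (4 : F) = 2 * 2 by norm_num] using mul_ne_zero h2 h2
    simp only [Fin.snoc_castSucc]
    field_simp
    ring

end Kakeya

open Kakeya

theorem IsKakeyaSet.parabolicSet_union_image_snoc {F : Type*} [Field F] [Fintype F]
    [DecidableEq F] {n : ℕ} (h2 : (2 : F) ≠ 0) {K : Finset (Fin n → F)}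
    (hK : IsKakeyaSet (K : Set (Fin n → F))) :
    IsKakeyaSet
      ((parabolicSet n ∪ K.image (Fin.snoc · 0) : Finset _) : Set (Fin (n + 1) → F)) := by
  refine Fin.snocCases fun x c => ?_
  by_cases hc : c = 0
  · obtain ⟨y, hy⟩ := hK x
    refine ⟨Fin.snoc y 0, fun t => mem_union_right _ (mem_image.2 ⟨_, hy t, ?_⟩)⟩
    funext i
    refine Fin.lastCases ?_ (fun j => ?_) i <;> simp [hc]
  · exact ⟨_, fun t => mem_union_left _ (line_mem_parabolicSet h2 x hc t)⟩

theorem exists_finset_isKakeyaSet_card_le {F : Type*} [Field F] [Fintype F] [DecidableEq F]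
    (h2 : (2 : F) ≠ 0) (n : ℕ) :
    ∃ K : Finset (Fin n → F), IsKakeyaSet (K : Set (Fin n → F)) ∧
      #K ≤ 1 + Fintype.card F * ∑ k ∈ range n, #(univ.image fun x : F => x ^ 2) ^ k := by
  induction n with
  | zero => exact ⟨univ, fun _ => ⟨0, fun _ => mem_coe.2 (mem_univ _)⟩, by simp⟩
  | succ n ih =>
    obtain ⟨K, hK, hKcard⟩ := ih
    refine ⟨_, hK.parabolicSet_union_image_snoc h2, ?_⟩
    calc #(parabolicSet n ∪ K.image (Fin.snoc · 0))
        ≤ #(parabolicSet (F := F) n) + #K :=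
          (card_union_le _ _).trans (Nat.add_le_add_left card_image_le _)
      _ ≤ _ := by
          rw [sum_range_succ, mul_add]
          linarith [card_parabolicSet_le (F := F) n]

theorem one_add_mul_geom_sum_lt_s19 {R : Type*} [Field R] [LinearOrder R] [IsStrictOrderedRing R]
    {q s : R} (hq : 1 < q) (hs₀ : 0 ≤ s) (hs : s ≤ (q + 1) / 2) (n : ℕ) :
    1 + q * ∑ k ∈ range n, s ^ k < 2 * (1 + 1 / (q - 1)) * ((q + 1) / 2) ^ n := by
  have hq₁ : 0 < q - 1 := sub_pos.2 hq
  have hsum : ∑ k ∈ range n, s ^ k ≤ 2 / (q - 1) * (((q + 1) / 2) ^ n - 1) := by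
    calc ∑ k ∈ range n, s ^ k ≤ ∑ k ∈ range n, ((q + 1) / 2) ^ k :=
          sum_le_sum fun k _ => pow_le_pow_left₀ hs₀ hs k
      _ = _ := by
          rw [geom_sum_eq (by linarith), show (q + 1) / 2 - 1 = (q - 1) / 2 by ring]
          field_simp
  have hq_coef : q * (2 / (q - 1)) = 2 * (1 + 1 / (q - 1)) := by
    field_simp
    ring
  have hcoef : 1 < 2 * (1 + 1 / (q - 1)) := by
    linarith [one_div_pos.2 hq₁]
  calc 1 + q * ∑ k ∈ range n, s ^ k ≤ 1 + q * (2 / (q - 1) * (((q + 1) / 2) ^ n - 1)) := by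
        gcongr
    _ = 2 * (1 + 1 / (q - 1)) * ((q + 1) / 2) ^ n + (1 - 2 * (1 + 1 / (q - 1))) := by
        rw [← mul_assoc, hq_coef]
        ring
    _ < _ := by linarith

theorem kakeya_upper_bound_q_odd_general (n : ℕ)
    (F : Type*) [Field F] [Fintype F] (hq : Odd (Fintype.card F)) :
    ∃ K : Set (Fin n → F),
      (∀ x : Fin n → F, ∃ y : Fin n → F, ∀ t : F, (fun i => y i + t * x i) ∈ K) ∧
      (K.ncard : ℚ) <
        2 * (1 + 1 / (Fintype.card F - 1)) * ((Fintype.card F + 1) / 2) ^ n := by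
  classical
  have hF := FiniteField.ringChar_ne_two_of_odd_card hq
  obtain ⟨K, hK, hKcard⟩ := exists_finset_isKakeyaSet_card_le (Ring.two_ne_zero hF) n
  set s := #(univ.image fun x : F => x ^ 2)
  have hs : (s : ℚ) ≤ (Fintype.card F + 1) / 2 := by
    rw [le_div_iff₀ two_pos]
    exact_mod_cast (mul_comm _ _).trans_le (FiniteField.two_mul_card_image_sq_le hF)
  refine ⟨K, hK, ?_⟩
  rw [Set.ncard_coe_finset]
  calc (#K : ℚ) ≤ 1 + Fintype.card F * ∑ k ∈ range n, (s : ℚ) ^ k := mod_cast hKcard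
    _ < _ := one_add_mul_geom_sum_lt_s19 (mod_cast Fintype.one_lt_card) s.cast_nonneg hs n

/-- For an odd prime power `q` and `n ≥ 1`, there is a Kakeya set `K ⊆ F_q^n` with
`|K| < 2·(1 + 1/(q−1))·((q+1)/2)^n`. -/
theorem kakeya_upper_bound_q_odd (n : ℕ) (hn : 1 ≤ n)
    (F : Type*) [Field F] [Fintype F] (hq : Odd (Fintype.card F)) :
    ∃ K : Set (Fin n → F),
      (∀ x : Fin n → F, ∃ y : Fin n → F, ∀ t : F, (fun i => y i + t * x i) ∈ K) ∧
      (K.ncard : ℚ) <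
        2 * (1 + 1 / (Fintype.card F - 1)) * ((Fintype.card F + 1) / 2) ^ n :=
  kakeya_upper_bound_q_odd_general n F hq
end
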